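/- Let σ ∈ {1,−1}, let n ≥ 2, let m_1,…,m_n > 0 be masses extended n-periodically (m_{j+kn} = m_j for k ∈ ℤ), and fix i ∈ {1,…,n}. Suppose there is a nonempty open interval I ⊂ (0,∞) such that for every r ∈ I one has 2 − σr²(1−cos(2πj/n)) > 0 for all j ∈ {1,…,n−1} and Σ_{j=1}^{n−1} m_{j+i}·sin(2πj/n) / ((1−cos(2πj/n))^{3/2}·(2 − σr²(1−cos(2πj/n)))^{3/2}) = 0. Then (m_{j+i} − m_{n−j+i})·sin(2πj/n) = 0 for every j ∈ {1,…,n−1}; in particular m_{i+1} = m_{i−1}. -/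

import Mathlib

/-!
Write `θ_j = 2πj/n`. Pairing `j` with `n - j` fixes `cos θ_j` and flips the sign of `sin θ_j`, so the
balance sum equals `∑_{1 ≤ j ≤ (n-1)/2} D_j (1 - cos θ_j)^{-3/2} (2 - σ (1 - cos θ_j) r²)^{-3/2}` with
`D_j = (m_{j+i} - m_{n-j+i}) sin θ_j`, and on this half range the numbers `1 - cos θ_j` are
distinct. The functions `r ↦ (a - c r²)^q` with distinct `c` and `q ∉ ℕ` are linearly independent
on every nonempty open set: differentiating `k` times and evaluating at one point `r₀ ≠ 0` gives
the moment equations `∑_j e_j (c_j / (a - c_j r₀²))^k = 0`, a Vandermonde system with distinct nodes.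
Hence every `D_j` vanishes.
-/

open Real Finset

theorem Finset.eq_zero_of_forall_sum_mul_pow_eq_zero {R ι : Type*} [CommRing R] [IsDomain R]
    {J : Finset ι} {b e : ι → R}
    (hb : Set.InjOn b J) (h : ∀ k : ℕ, ∑ j ∈ J, e j * b j ^ k = 0) : ∀ j ∈ J, e j = 0 := by
  let φ := J.equivFin
  have hinj : Function.Injective fun l : Fin J.card => b (φ.symm l) :=
    fun l l' hl => φ.symm.injective (Subtype.ext (hb (φ.symm l).2 (φ.symm l').2 hl))
  have hzero := Matrix.eq_zero_of_forall_pow_sum_mul_pow_eq_zero hinj (v := fun l => e (φ.symm l))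
    fun k => by
      rw [← h k, ← J.sum_coe_sort]
      exact φ.symm.sum_comp fun j : J => e j * b j ^ (k : ℕ)
  intro j hj
  simpa using congrFun hzero (φ ⟨j, hj⟩)

theorem hasDerivAt_sub_mul_sq_rpow {a c p r : ℝ} (h : a - c * r ^ 2 ≠ 0) :
    HasDerivAt (fun x => (a - c * x ^ 2) ^ p)
      (-(2 * r * p) * (c * (a - c * r ^ 2) ^ (p - 1))) r := by
  have hin : HasDerivAt (fun x : ℝ => a - c * x ^ 2) (-(c * (2 * r))) r := by
    simpa using ((hasDerivAt_pow 2 r).const_mul c).const_sub a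
  refine ((Real.hasDerivAt_rpow_const (p := p) (Or.inl h)).comp r hin).congr_deriv ?_
  ring

section LinearIndependence

variable {ι : Type*} {J : Finset ι} {a q : ℝ} {c d : ι → ℝ} {U : Set ℝ}

theorem sum_mul_pow_mul_sub_mul_sq_rpow_eq_zero (hU : IsOpen U) (hU0 : ∀ r ∈ U, r ≠ 0)
    (hq : ∀ k : ℕ, q ≠ k) (hne : ∀ r ∈ U, ∀ j ∈ J, a - c j * r ^ 2 ≠ 0)
    (hsum : ∀ r ∈ U, ∑ j ∈ J, d j * (a - c j * r ^ 2) ^ q = 0) (k : ℕ) :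
    ∀ r ∈ U, ∑ j ∈ J, d j * c j ^ k * (a - c j * r ^ 2) ^ (q - k) = 0 := by
  induction k with
  | zero => simpa using hsum
  | succ k ih =>
    intro r hr
    have hexp : q - ↑(k + 1) = q - k - 1 := by push_cast; ring
    have hderiv : HasDerivAt (fun x => ∑ j ∈ J, d j * c j ^ k * (a - c j * x ^ 2) ^ (q - k))
        (-(2 * r * (q - k)) *
          ∑ j ∈ J, d j * c j ^ (k + 1) * (a - c j * r ^ 2) ^ (q - ↑(k + 1))) r := by
      rw [mul_sum, hexp]
      refine HasDerivAt.fun_sum fun j hj => ?_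
      refine ((hasDerivAt_sub_mul_sq_rpow (hne r hr j hj)).const_mul (d j * c j ^ k)).congr_deriv ?_
      ring
    have hzero : HasDerivAt (fun x => ∑ j ∈ J, d j * c j ^ k * (a - c j * x ^ 2) ^ (q - k)) 0 r :=
      (hasDerivAt_const r 0).congr_of_eventuallyEq
        (Filter.eventuallyEq_of_mem (hU.mem_nhds hr) ih)
    have hfactor : -(2 * r * (q - k)) ≠ 0 := by
      simpa [hU0 r hr, sub_eq_zero] using hq k
    exact (mul_eq_zero.mp (hderiv.unique hzero)).resolve_left hfactor

theorem eq_zero_of_sum_mul_sub_mul_sq_rpow_eq_zero (hU : IsOpen U) (hUne : U.Nonempty)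
    (ha : a ≠ 0) (hq : ∀ k : ℕ, q ≠ k) (hc : Set.InjOn c J)
    (hpos : ∀ r ∈ U, ∀ j ∈ J, 0 < a - c j * r ^ 2)
    (hsum : ∀ r ∈ U, ∑ j ∈ J, d j * (a - c j * r ^ 2) ^ q = 0) : ∀ j ∈ J, d j = 0 := by
  -- each `r`-derivative produces a factor `r`, so we work on `U \ {0}`
  obtain ⟨r₀, hr₀U, hr₀⟩ := (dense_compl_singleton (0 : ℝ)).inter_open_nonempty U hU hUne
  have hderivs := sum_mul_pow_mul_sub_mul_sq_rpow_eq_zero (hU.inter isOpen_compl_singleton)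
    (fun r hr => hr.2) hq (fun r hr j hj => (hpos r hr.1 j hj).ne') (fun r hr => hsum r hr.1)
  set x : ι → ℝ := fun j => a - c j * r₀ ^ 2
  have hmoments : ∀ k : ℕ, ∑ j ∈ J, d j * x j ^ q * (c j / x j) ^ k = 0 := fun k => by
    rw [← hderivs k r₀ ⟨hr₀U, hr₀⟩]
    refine sum_congr rfl fun j hj => ?_
    rw [rpow_sub_natCast (hpos r₀ hr₀U j hj).ne', div_pow]
    ring
  have hinj : Set.InjOn (fun j => c j / x j) J := by
    intro j hj l hl hjl
    rw [div_eq_div_iff (hpos r₀ hr₀U j hj).ne' (hpos r₀ hr₀U l hl).ne'] at hjl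
    exact hc hj hl (mul_left_cancel₀ ha (by linear_combination hjl))
  intro j hj
  have := Finset.eq_zero_of_forall_sum_mul_pow_eq_zero hinj hmoments j hj
  exact (mul_eq_zero.mp this).resolve_right (rpow_pos_of_pos (hpos r₀ hr₀U j hj) q).ne'

end LinearIndependence

theorem cos_two_pi_mul_sub_div {N : ℝ} (hN : N ≠ 0) (x : ℝ) :
    cos (2 * π * (N - x) / N) = cos (2 * π * x / N) := by
  rw [show 2 * π * (N - x) / N = 2 * π - 2 * π * x / N by field_simp, cos_two_pi_sub]

theorem sin_two_pi_mul_sub_div {N : ℝ} (hN : N ≠ 0) (x : ℝ) :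
    sin (2 * π * (N - x) / N) = -sin (2 * π * x / N) := by
  rw [show 2 * π * (N - x) / N = 2 * π - 2 * π * x / N by field_simp, sin_two_pi_sub]

theorem sin_two_pi_mul_div_of_two_mul_eq {N x : ℝ} (hN : N ≠ 0) (hx : 2 * x = N) :
    sin (2 * π * x / N) = 0 := by
  rw [show 2 * π * x / N = π by rw [div_eq_iff hN]; linear_combination π * hx, sin_pi]

theorem sin_two_pi_mul_div_pos {N x : ℝ} (hx : 0 < x) (hxN : 2 * x < N) :
    0 < sin (2 * π * x / N) := by
  have hN : 0 < N := by linarith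
  apply sin_pos_of_pos_of_lt_pi (by positivity)
  rw [div_lt_iff₀ hN]
  nlinarith [pi_pos]

theorem one_sub_cos_two_pi_mul_div_pos {N x : ℝ} (hx : 0 < x) (hxN : x < N) :
    0 < 1 - cos (2 * π * x / N) := by
  have hN : 0 < N := by linarith
  have hθ : 0 < 2 * π * x / N := by positivity
  have hθ' : 2 * π * x / N < 2 * π := by
    rw [div_lt_iff₀ hN]; nlinarith [pi_pos]
  have hne : cos (2 * π * x / N) ≠ 1 := fun h =>
    hθ.ne' ((cos_eq_one_iff_of_lt_of_lt (by linarith) hθ').mp h)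
  linarith [(cos_le_one _).lt_of_ne hne]

theorem injOn_cos_two_pi_mul_div {N : ℝ} (hN : 0 < N) :
    Set.InjOn (fun x => cos (2 * π * x / N)) (Set.Icc 0 (N / 2)) := by
  intro x hx y hy hxy
  have hmem : ∀ z ∈ Set.Icc 0 (N / 2), 2 * π * z / N ∈ Set.Icc 0 π := fun z hz => by
    refine ⟨by have := hz.1; positivity, ?_⟩
    rw [div_le_iff₀ hN]; nlinarith [pi_pos, hz.2]
  have := injOn_cos (hmem x hx) (hmem y hy) hxy
  field_simp at this
  nlinarith [pi_pos]

theorem intCast_bounds_of_mem_Icc_half {n : ℕ} {j : ℤ} (hj : j ∈ Icc 1 (((n : ℤ) - 1) / 2)) :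
    1 ≤ (j : ℝ) ∧ 2 * (j : ℝ) < n := by
  rw [mem_Icc] at hj
  constructor
  · exact_mod_cast hj.1
  · exact_mod_cast (by omega : 2 * j < n)

theorem injOn_cos_two_pi_mul_intCast_div (n : ℕ) :
    Set.InjOn (fun j : ℤ => cos (2 * π * j / n)) (Icc 1 (((n : ℤ) - 1) / 2)) := by
  intro j hj l hl hjl
  obtain ⟨hj1, hj2⟩ := intCast_bounds_of_mem_Icc_half hj
  obtain ⟨hl1, hl2⟩ := intCast_bounds_of_mem_Icc_half hl
  exact_mod_cast injOn_cos_two_pi_mul_div (N := n) (by linarith)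
    ⟨by linarith, by linarith⟩ ⟨by linarith, by linarith⟩ hjl

theorem sum_Icc_eq_sum_Icc_half_add_reflect {M : Type*} [AddCommMonoid M] {n : ℤ} {f : ℤ → M}
    (hmid : ∀ j, 2 * j = n → f j = 0) :
    ∑ j ∈ Icc 1 (n - 1), f j = ∑ j ∈ Icc 1 ((n - 1) / 2), (f j + f (n - j)) := by
  have hlower : (Icc 1 (n - 1)).filter (fun j => 2 * j < n) = Icc 1 ((n - 1) / 2) := by
    ext j; simp only [mem_filter, mem_Icc]; omega
  have hupper : ∑ j ∈ (Icc 1 (n - 1)).filter (fun j => ¬2 * j < n), f j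
      = ∑ j ∈ Icc 1 ((n - 1) / 2), f (n - j) :=
    calc _ = ∑ j ∈ (Icc 1 (n - 1)).filter (fun j => n < 2 * j), f j := by
          refine (sum_subset (fun j => ?_) fun j hj hj' => hmid j ?_).symm
          · simp only [mem_filter, mem_Icc]; omega
          · simp only [mem_filter, mem_Icc] at hj hj'; omega
      _ = _ := by
          refine sum_nbij' (fun j => n - j) (fun j => n - j) ?_ ?_ (fun j _ => sub_sub_cancel n j)
            (fun j _ => sub_sub_cancel n j) (fun j _ => by rw [sub_sub_cancel])
          all_goals intro j hj; simp only [mem_filter, mem_Icc] at hj ⊢; omega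
  rw [← sum_filter_add_sum_filter_not _ (fun j => 2 * j < n), hlower, hupper, sum_add_distrib]

theorem forall_Icc_of_forall_Icc_half {n : ℤ} {p : ℤ → Prop} (hmid : ∀ j, 2 * j = n → p j)
    (hreflect : ∀ j, p (n - j) → p j) (h : ∀ j ∈ Icc 1 ((n - 1) / 2), p j) :
    ∀ j ∈ Icc 1 (n - 1), p j := by
  intro j hj
  rw [mem_Icc] at hj
  rcases lt_trichotomy (2 * j) n with hlt | heq | hgt
  · exact h j (by rw [mem_Icc]; omega)
  · exact hmid j heq
  · exact hreflect j (h (n - j) (by rw [mem_Icc]; omega))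

theorem sum_Icc_mul_sin_mul_eq_sum_Icc_half {n : ℕ} (hn : n ≠ 0) (a : ℤ → ℝ) (w : ℝ → ℝ) :
    ∑ j ∈ Icc (1 : ℤ) (n - 1), a j * sin (2 * π * j / n) * w (cos (2 * π * j / n)) =
      ∑ j ∈ Icc 1 (((n : ℤ) - 1) / 2),
        (a j - a (n - j)) * sin (2 * π * j / n) * w (cos (2 * π * j / n)) := by
  have hn' : (n : ℝ) ≠ 0 := Nat.cast_ne_zero.mpr hn
  rw [sum_Icc_eq_sum_Icc_half_add_reflect fun j hj => by
    rw [sin_two_pi_mul_div_of_two_mul_eq hn' (by exact_mod_cast hj), mul_zero, zero_mul]]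
  refine sum_congr rfl fun j _ => ?_
  push_cast
  rw [cos_two_pi_mul_sub_div hn', sin_two_pi_mul_sub_div hn']
  ring

theorem forall_sub_mul_sin_eq_zero_of_Icc_half {n : ℕ} (hn : n ≠ 0) (a : ℤ → ℝ)
    (h : ∀ j ∈ Icc 1 (((n : ℤ) - 1) / 2), (a j - a (n - j)) * sin (2 * π * j / n) = 0) :
    ∀ j ∈ Icc (1 : ℤ) (n - 1), (a j - a (n - j)) * sin (2 * π * j / n) = 0 := by
  have hn' : (n : ℝ) ≠ 0 := Nat.cast_ne_zero.mpr hn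
  refine forall_Icc_of_forall_Icc_half (fun j hj => ?_) (fun j hj => ?_) h
  · rw [sin_two_pi_mul_div_of_two_mul_eq hn' (by exact_mod_cast hj), mul_zero]
  · push_cast at hj
    rw [sin_two_pi_mul_sub_div hn', sub_sub_cancel] at hj
    linear_combination hj

theorem add_one_eq_sub_one_of_forall_sub_mul_sin_eq_zero {n : ℕ} (hn : 2 ≤ n) {m : ℤ → ℝ}
    (hper : ∀ j : ℤ, m (j + n) = m j) {i : ℤ}
    (h : ∀ j ∈ Icc (1 : ℤ) (n - 1), (m (j + i) - m (n - j + i)) * sin (2 * π * j / n) = 0) :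
    m (i + 1) = m (i - 1) := by
  rcases hn.eq_or_lt with rfl | hn3
  · rw [← hper (i - 1)]
    ring_nf
  · have hsin : 0 < sin (2 * π * ((1 : ℤ) : ℝ) / n) :=
      sin_two_pi_mul_div_pos (by norm_num) (by exact_mod_cast (by omega : 2 * 1 < n))
    have h1 := (mul_eq_zero.mp (h 1 (by rw [mem_Icc]; omega))).resolve_right hsin.ne'
    rw [add_comm i, sub_eq_zero.mp h1, ← hper (i - 1)]
    ring_nf

theorem polygonal_balance_forces_mass_symmetry
    (σ : ℝ) (hσ : σ = 1 ∨ σ = -1) (n : ℕ) (hn : 2 ≤ n)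
    (m : ℤ → ℝ) (hper : ∀ j : ℤ, m (j + n) = m j)
    (i : ℤ)
    (I : Set ℝ) (hIo : IsOpen I) (hIne : I.Nonempty)
    (hpos : ∀ r ∈ I, ∀ j ∈ Finset.Icc (1 : ℤ) (n - 1),
      0 < 2 - σ * r ^ 2 * (1 - Real.cos (2 * π * j / n)))
    (hsum : ∀ r ∈ I,
      ∑ j ∈ Finset.Icc (1 : ℤ) (n - 1),
        m (j + i) * Real.sin (2 * π * j / n) /
          ((1 - Real.cos (2 * π * j / n)) ^ ((3 : ℝ) / 2) *
            (2 - σ * r ^ 2 * (1 - Real.cos (2 * π * j / n))) ^ ((3 : ℝ) / 2)) = 0) :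
    (∀ j ∈ Finset.Icc (1 : ℤ) (n - 1),
      (m (j + i) - m (n - j + i)) * Real.sin (2 * π * j / n) = 0) ∧
    m (i + 1) = m (i - 1) := by
  have hσ0 : σ ≠ 0 := by rcases hσ with rfl | rfl <;> norm_num
  have hhalf_sub : Icc (1 : ℤ) (((n : ℤ) - 1) / 2) ⊆ Icc 1 (n - 1) := Icc_subset_Icc le_rfl (by omega)
  have hcoeff : ∀ j ∈ Icc (1 : ℤ) (((n : ℤ) - 1) / 2),
      (m (j + i) - m (n - j + i)) * sin (2 * π * j / n) / (1 - cos (2 * π * j / n)) ^ ((3 : ℝ) / 2)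
        = 0 := by
    refine eq_zero_of_sum_mul_sub_mul_sq_rpow_eq_zero (q := -((3 : ℝ) / 2)) (a := 2)
      (c := fun j : ℤ => σ * (1 - cos (2 * π * j / n))) hIo hIne two_ne_zero
      (fun k h => by linarith [k.cast_nonneg (α := ℝ)])
      (fun j hj l hl hjl => injOn_cos_two_pi_mul_intCast_div n hj hl
        (by linarith [mul_left_cancel₀ hσ0 hjl]))
      (fun r hr j hj => by linarith [hpos r hr j (hhalf_sub hj)]) fun r hr => ?_
    have hpair := sum_Icc_mul_sin_mul_eq_sum_Icc_half (n := n) (by omega) (fun j => m (j + i))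
      fun c => 1 / ((1 - c) ^ ((3 : ℝ) / 2) * (2 - σ * r ^ 2 * (1 - c)) ^ ((3 : ℝ) / 2))
    simp only [mul_one_div] at hpair
    rw [← hsum r hr, hpair]
    refine sum_congr rfl fun j hj => ?_
    rw [mul_right_comm σ, rpow_neg (hpos r hr j (hhalf_sub hj)).le]
    ring
  have hsym := forall_sub_mul_sin_eq_zero_of_Icc_half (n := n) (by omega) (fun j => m (j + i))
    fun j hj => by
      obtain ⟨hj1, hj2⟩ := intCast_bounds_of_mem_Icc_half hj
      have hA := one_sub_cos_two_pi_mul_div_pos (N := n) (by linarith) (by linarith)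
      simpa [(rpow_pos_of_pos hA _).ne'] using hcoeff j hj
  exact ⟨hsym, add_one_eq_sub_one_of_forall_sub_mul_sin_eq_zero hn hper hsym⟩
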